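/- arXiv:math/0312309 — 5 statements merged into one kernel-verified Lean document; each statement's English description precedes it below -/
import Mathlib

section
/- For every natural number k ≥ 1 and every vector x ∈ {0,1}^k, there exists a positive integer n such that x_i ≡ T^{(i)}(n) (mod 2) for all i with 0 ≤ i < k, where T^{(0)}(n) = n. -/
def T (n : ℕ) : ℕ := if n % 2 = 1 then (3 * n + 1) / 2 else n / 2

/-- Congruence mod 2^(k+1) is preserved (down one power) by T. -/
lemma T_key (k a b : ℕ) (h : a ≡ b [MOD 2^(k+1)]) : T a ≡ T b [MOD 2^k] := by
  have hpar : a % 2 = b % 2 := h.of_dvd ⟨2^k, by ring⟩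
  have hgcd : (2^(k+1)).gcd 2 = 2 := by
    have : (2:ℕ) ∣ 2^(k+1) := dvd_pow_self 2 (Nat.succ_ne_zero k)
    simpa [Nat.gcd_comm] using Nat.gcd_eq_right this
  have hdiv : 2^(k+1) / 2 = 2^k := by
    rw [pow_succ, Nat.mul_div_cancel] ; norm_num
  by_cases ho : a % 2 = 1
  · have hb : b % 2 = 1 := hpar ▸ ho
    have h2a : 2 * T a = 3 * a + 1 := by
      simp only [T, ho, if_pos]
      omega
    have h2b : 2 * T b = 3 * b + 1 := by
      simp only [T, hb, if_pos]
      omega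
    have : 2 * T a ≡ 2 * T b [MOD 2^(k+1)] := by
      rw [h2a, h2b]; exact (h.mul_left 3).add_right 1
    have := this.cancel_left_div_gcd (Nat.pow_pos (by norm_num))
    rwa [hgcd, hdiv] at this
  · have ho' : a % 2 = 0 := by omega
    have hb : b % 2 = 0 := by omega
    have h2a : 2 * T a = a := by unfold T; rw [if_neg (by omega : ¬ a % 2 = 1)]; omega
    have h2b : 2 * T b = b := by unfold T; rw [if_neg (by omega : ¬ b % 2 = 1)]; omega
    have : 2 * T a ≡ 2 * T b [MOD 2^(k+1)] := by rw [h2a, h2b]; exact h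
    have := this.cancel_left_div_gcd (Nat.pow_pos (by norm_num))
    rwa [hgcd, hdiv] at this

/-- Parities of iterates depend only on n mod 2^k. -/
lemma T_par : ∀ i k a b, i < k → a ≡ b [MOD 2^k] → T^[i] a % 2 = T^[i] b % 2 := by
  intro i
  induction i with
  | zero =>
    intro k a b hik h
    simpa [Nat.ModEq] using h.of_dvd (dvd_pow_self 2 (by omega : k ≠ 0))
  | succ j ih =>
    intro k a b hik h
    obtain ⟨k', rfl⟩ : ∃ k', k = k' + 1 := ⟨k - 1, by omega⟩
    rw [Function.iterate_succ_apply, Function.iterate_succ_apply]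
    exact ih k' (T a) (T b) (by omega) (T_key k' a b h)

lemma main' : ∀ k (x : Fin (k+1) → Fin 2),
    ∃ n : ℕ, 0 < n ∧ ∀ i : Fin (k+1), (x i : ℕ) = T^[(i : ℕ)] n % 2 := by
  intro k
  induction k with
  | zero =>
    intro x
    by_cases h0 : (x 0 : ℕ) = 0
    · exact ⟨2, by norm_num, fun i => by fin_cases i <;> simpa using h0⟩
    · have h1 : (x 0 : ℕ) = 1 := by have := (x 0).isLt; omega
      exact ⟨1, by norm_num, fun i => by fin_cases i <;> simpa using h1⟩
  | succ k ih =>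
    intro x
    obtain ⟨m, hm, hmx⟩ := ih (fun i => x i.succ)
    by_cases h0 : (x 0 : ℕ) = 0
    · refine ⟨2 * m, by omega, fun i => ?_⟩
      refine Fin.cases ?_ (fun j => ?_) i
      · simpa [Nat.mul_mod_right] using h0
      · have hT : T (2 * m) = m := by
          simp only [T, Nat.mul_mod_right, if_neg (by omega : ¬ (0:ℕ) = 1)]
          omega
        simpa [Function.iterate_succ_apply, hT] using hmx j
    · have h1 : (x 0 : ℕ) = 1 := by have := (x 0).isLt; omega
      set M := 2^(k+2) with hM
      have hM2 : 2 ∣ M := dvd_pow_self 2 (by omega)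
      have hMpos : 1 < M := by
        have : 2^1 ≤ 2^(k+2) := Nat.pow_le_pow_right (by norm_num) (by omega)
        omega
      have hcop : Nat.Coprime 3 M := Nat.Coprime.pow_right _ (by decide)
      obtain ⟨u, -, hu⟩ := Nat.exists_mul_mod_eq_one_of_coprime hcop hMpos
      have hu' : 3 * u ≡ 1 [MOD M] := by
        unfold Nat.ModEq
        rw [Nat.one_mod_eq_one.mpr (by omega)]
        exact hu
      set c := 2 * m + M - 1 with hc
      set n := u * c % M + M with hn
      have hnM : n % M = u * c % M := by
        simp [hn, Nat.add_mod_right]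
      have h3n : 3 * n ≡ c [MOD M] := by
        calc 3 * n ≡ 3 * (u * c) [MOD M] := Nat.ModEq.mul_left 3 hnM
          _ = (3 * u) * c := by ring
          _ ≡ 1 * c [MOD M] := Nat.ModEq.mul_right c hu'
          _ = c := by ring
      have hcodd : c % 2 = 1 := by
        obtain ⟨M', hM'⟩ := hM2; omega
      have hnodd : n % 2 = 1 := by
        have := h3n.of_dvd hM2
        unfold Nat.ModEq at this
        omega
      have hTn : 2 * T n = 3 * n + 1 := by
        simp only [T, hnodd, if_pos]; omega
      have hcongr : T n ≡ m [MOD 2^(k+1)] := by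
        have h1' : 3 * n + 1 ≡ c + 1 [MOD M] := h3n.add_right 1
        have hc1 : c + 1 = 2 * m + M := by omega
        have h2' : 2 * T n ≡ 2 * m [MOD M] := by
          rw [hTn]
          calc 3 * n + 1 ≡ c + 1 [MOD M] := h1'
            _ = 2 * m + M := hc1
            _ ≡ 2 * m + 0 [MOD M] := Nat.ModEq.add_left _ (Nat.modEq_zero_iff_dvd.mpr dvd_rfl)
            _ = 2 * m := by ring
        have hgcd : M.gcd 2 = 2 := by simpa [Nat.gcd_comm] using Nat.gcd_eq_right hM2
        have hdiv : M / 2 = 2^(k+1) := by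
          rw [hM, pow_succ, Nat.mul_div_cancel]; norm_num
        have := h2'.cancel_left_div_gcd (by omega)
        rwa [hgcd, hdiv] at this
      refine ⟨n, by omega, fun i => ?_⟩
      refine Fin.cases ?_ (fun j => ?_) i
      · simpa [hnodd] using h1
      · rw [Fin.val_succ, Function.iterate_succ_apply]
        rw [T_par j (k+1) (T n) m j.isLt hcongr]
        exact hmx j

/-- For every `k ≥ 1` and every vector `x ∈ {0,1}^k`, there is a positive integer `n`
whose length-`k` parity vector `(n, T n, …, T^[k-1] n) mod 2` equals `x`. -/
theorem stmt_0 (k : ℕ) (hk : 1 ≤ k) (x : Fin k → Fin 2) :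
    ∃ n : ℕ, 0 < n ∧ ∀ i : Fin k, (x i : ℕ) = T^[(i : ℕ)] n % 2 := by
  obtain ⟨k', rfl⟩ : ∃ k', k = k' + 1 := ⟨k - 1, by omega⟩
  exact main' k' x
end

section
/- For all positive integers n, m and every natural number k ≥ 1, one has n ≡ m (mod 2^k) if and only if T^{(i)}(n) ≡ T^{(i)}(m) (mod 2) for all i with 0 ≤ i < k. In other words, the length-k parity vector (n, T(n), ..., T^{(k-1)}(n)) mod 2 depends only on, and determines, the residue class of n modulo 2^k. -/
/-!
Induction on `k`. Two numbers agree modulo `2^(k+1)` iff they have the same parity and their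
images under `T` agree modulo `2^k`: for even `n, m` this is cancelling the factor `2` in
`n = 2 T n`, for odd ones cancelling `2` in `3 n + 1 = 2 T n` and then the unit `3` modulo `2^(k+1)`.
-/

open Nat

theorem two_mul_T_of_even {n : ℕ} (h : n % 2 = 0) : 2 * T n = n := by
  simp only [T, h, zero_ne_one, if_false]
  omega

theorem two_mul_T_of_odd {n : ℕ} (h : n % 2 = 1) : 2 * T n = 3 * n + 1 := by
  simp only [T, h, if_true]
  omega

theorem two_mul_modEq_two_pow_succ_iff {a b k : ℕ} :
    2 * a ≡ 2 * b [MOD 2 ^ (k + 1)] ↔ a ≡ b [MOD 2 ^ k] := by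
  rw [pow_succ']
  exact ModEq.mul_left_cancel_iff' two_ne_zero

theorem three_mul_add_one_modEq_two_pow_iff {a b k : ℕ} :
    3 * a + 1 ≡ 3 * b + 1 [MOD 2 ^ k] ↔ a ≡ b [MOD 2 ^ k] := by
  refine ⟨fun h ↦ ?_, fun h ↦ (h.mul_left 3).add_right 1⟩
  have hcop : (2 ^ k).gcd 3 = 1 := (Coprime.pow_left k (by decide : Coprime 2 3))
  exact (h.add_right_cancel' 1).cancel_left_of_coprime hcop

theorem T_modEq_two_pow_iff {n m k : ℕ} (hnm : n % 2 = m % 2) :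
    T n ≡ T m [MOD 2 ^ k] ↔ n ≡ m [MOD 2 ^ (k + 1)] := by
  rw [← two_mul_modEq_two_pow_succ_iff]
  rcases Nat.mod_two_eq_zero_or_one n with hn | hn
  · rw [two_mul_T_of_even hn, two_mul_T_of_even (hnm ▸ hn)]
  · rw [two_mul_T_of_odd hn, two_mul_T_of_odd (hnm ▸ hn), three_mul_add_one_modEq_two_pow_iff]

theorem modEq_two_pow_succ_iff {n m k : ℕ} :
    n ≡ m [MOD 2 ^ (k + 1)] ↔ n ≡ m [MOD 2] ∧ T n ≡ T m [MOD 2 ^ k] := by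
  refine ⟨fun h ↦ ?_, fun ⟨hpar, hT⟩ ↦ (T_modEq_two_pow_iff hpar).1 hT⟩
  have hpar : n ≡ m [MOD 2] := h.of_dvd (dvd_pow_self 2 k.succ_ne_zero)
  exact ⟨hpar, (T_modEq_two_pow_iff hpar).2 h⟩

theorem modEq_two_pow_iff_forall_iterate_T_modEq_two (n m k : ℕ) :
    n ≡ m [MOD 2 ^ k] ↔ ∀ i < k, T^[i] n ≡ T^[i] m [MOD 2] := by
  induction k generalizing n m with
  | zero => simpa using modEq_one
  | succ k ih =>
    rw [modEq_two_pow_succ_iff, ih, forall_lt_succ_left]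
    rfl

theorem stmt_1_general (n m : ℕ) (k : ℕ) :
    n % 2 ^ k = m % 2 ^ k ↔ ∀ i < k, T^[i] n % 2 = T^[i] m % 2 :=
  modEq_two_pow_iff_forall_iterate_T_modEq_two n m k

/-- For positive integers `n, m` and `k ≥ 1`: `n ≡ m (mod 2^k)` iff
`T^[i] n ≡ T^[i] m (mod 2)` for all `i < k`. -/
theorem stmt_1 (n m : ℕ) (hn : 0 < n) (hm : 0 < m) (k : ℕ) (hk : 1 ≤ k) :
    n % 2 ^ k = m % 2 ^ k ↔ ∀ i < k, T^[i] n % 2 = T^[i] m % 2 :=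
  stmt_1_general n m k
end

section
/- For every natural number k ≥ 1 and every vector x ∈ {0,1}^k, there exists exactly one positive integer n with 1 ≤ n ≤ 2^k such that x_i ≡ T^{(i)}(n) (mod 2) for all i with 0 ≤ i < k. Hence the map sending a residue class modulo 2^k to its length-k parity vector is a bijection between the 2^k residue classes modulo 2^k and the set {0,1}^k. -/
def parityVector (k n : ℕ) : Fin k → Fin 2 := fun i => ⟨T^[i] n % 2, Nat.mod_lt _ two_pos⟩

lemma two_mul_T (n : ℕ) : 2 * T n = if n % 2 = 1 then 3 * n + 1 else n := by
  unfold T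
  split <;> omega

lemma modEq_two_pow_succ_of_T_modEq {j n m : ℕ} (hpar : n % 2 = m % 2)
    (h : T n ≡ T m [MOD 2 ^ j]) : n ≡ m [MOD 2 ^ (j + 1)] := by
  have h2 : 2 * T n ≡ 2 * T m [MOD 2 ^ (j + 1)] := by
    rw [pow_succ']
    exact h.mul_left' 2
  rw [two_mul_T, two_mul_T, ← hpar] at h2
  split_ifs at h2
  · have h3 : 3 * n ≡ 3 * m [MOD 2 ^ (j + 1)] := Nat.ModEq.add_right_cancel' 1 h2
    exact h3.cancel_left_of_coprime (Nat.Coprime.pow_left _ (by decide))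
  · exact h2

lemma modEq_two_pow_of_parityVector_eq {k n m : ℕ} (h : parityVector k n = parityVector k m) :
    n ≡ m [MOD 2 ^ k] := by
  induction k generalizing n m with
  | zero => exact Nat.modEq_one
  | succ k ih =>
    have hpar (i : Fin (k + 1)) : T^[i] n % 2 = T^[i] m % 2 := congrArg Fin.val (congrFun h i)
    refine modEq_two_pow_succ_of_T_modEq (hpar 0) (ih (funext fun i => Fin.ext ?_))
    exact hpar i.succ

lemma parityVector_injOn (k : ℕ) :
    Set.InjOn (parityVector k) (Finset.Icc 1 (2 ^ k)) := by
  intro n hn m hm h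
  simp only [Finset.coe_Icc, Set.mem_Icc] at hn hm
  refine (modEq_two_pow_of_parityVector_eq h).eq_of_abs_lt ?_
  generalize 2 ^ k = N at hn hm
  rw [abs_lt]
  constructor <;> omega

lemma parityVector_surjOn (k : ℕ) :
    Set.SurjOn (parityVector k) (Finset.Icc 1 (2 ^ k)) (Finset.univ : Finset (Fin k → Fin 2)) :=
  Finset.surjOn_of_injOn_of_card_le _ (fun _ _ => Finset.mem_coe.2 (Finset.mem_univ _))
    (parityVector_injOn k) (by simp)

theorem stmt_2_general (k : ℕ) (x : Fin k → Fin 2) :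
    ∃! n : ℕ, (1 ≤ n ∧ n ≤ 2 ^ k) ∧ ∀ i : Fin k, (x i : ℕ) = T^[(i : ℕ)] n % 2 := by
  obtain ⟨n, hn, rfl⟩ := parityVector_surjOn k (Finset.mem_coe.2 (Finset.mem_univ x))
  refine ⟨n, ⟨Finset.mem_Icc.1 hn, fun _ => rfl⟩, fun m ⟨hm, hpar⟩ => ?_⟩
  exact parityVector_injOn k (Finset.mem_Icc.2 hm) hn (funext fun i => Fin.ext (hpar i).symm)

/-- For every `k ≥ 1` and vector `x ∈ {0,1}^k`, there is exactly one `n` with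
`1 ≤ n ≤ 2^k` whose length-`k` parity vector equals `x`; i.e. residue classes mod `2^k`
biject with `{0,1}^k` via parity vectors. -/
theorem stmt_2 (k : ℕ) (hk : 1 ≤ k) (x : Fin k → Fin 2) :
    ∃! n : ℕ, (1 ≤ n ∧ n ≤ 2 ^ k) ∧ ∀ i : Fin k, (x i : ℕ) = T^[(i : ℕ)] n % 2 :=
  stmt_2_general k x
end

section
/- Let k ≥ 1 and let n, m be positive integers whose length-k parity vectors agree, i.e., T^{(i)}(n) ≡ T^{(i)}(m) (mod 2) for all 0 ≤ i < k. Let a = #{ i : 0 ≤ i < k and T^{(i)}(n) is odd }. Then, as integers, 2^k · (T^{(k)}(m) − T^{(k)}(n)) = 3^a · (m − n). In particular, on each residue class modulo 2^k, T^{(k)} is given by a single affine formula n ↦ (3^a n + r)/2^k with the exponent a and the constant r determined by the parity vector. -/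
theorem two_mul_T_sub_T_of_mod_two_eq {n m : ℕ} (h : n % 2 = m % 2) :
    2 * ((T m : ℤ) - T n) = 3 ^ (if n % 2 = 1 then 1 else 0) * ((m : ℤ) - n) := by
  unfold T
  split_ifs <;> omega

theorem two_pow_mul_iterate_T_sub_iterate_T {k n m : ℕ}
    (hpar : ∀ i < k, T^[i] n % 2 = T^[i] m % 2) :
    2 ^ k * ((T^[k] m : ℤ) - T^[k] n) =
      3 ^ Nat.count (fun i => T^[i] n % 2 = 1) k * ((m : ℤ) - n) := by
  induction k with
  | zero => simp
  | succ k ih =>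
    have hstep := two_mul_T_sub_T_of_mod_two_eq (hpar k k.lt_add_one)
    rw [Function.iterate_succ_apply', Function.iterate_succ_apply', Nat.count_succ, pow_succ,
      pow_add, mul_assoc, hstep, mul_left_comm, ih fun i hi => hpar i (hi.trans k.lt_add_one)]
    ring

theorem stmt_3_general (k : ℕ) (n m : ℕ)
    (hpar : ∀ i < k, T^[i] n % 2 = T^[i] m % 2) :
    (2 : ℤ) ^ k * ((T^[k] m : ℤ) - (T^[k] n : ℤ)) =
      (3 : ℤ) ^ ((Finset.range k).filter (fun i => T^[i] n % 2 = 1)).card *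
        ((m : ℤ) - (n : ℤ)) := by
  rw [← Nat.count_eq_card_filter_range]
  exact two_pow_mul_iterate_T_sub_iterate_T hpar

/-- If the length-`k` parity vectors of positive integers `n` and `m` agree, and
`a` is the number of odd iterates `T^[i] n` for `i < k`, then as integers
`2^k * (T^[k] m - T^[k] n) = 3^a * (m - n)`. -/
theorem stmt_3 (k : ℕ) (hk : 1 ≤ k) (n m : ℕ) (hn : 0 < n) (hm : 0 < m)
    (hpar : ∀ i < k, T^[i] n % 2 = T^[i] m % 2) :
    (2 : ℤ) ^ k * ((T^[k] m : ℤ) - (T^[k] n : ℤ)) =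
      (3 : ℤ) ^ ((Finset.range k).filter (fun i => T^[i] n % 2 = 1)).card *
        ((m : ℤ) - (n : ℤ)) :=
  stmt_3_general k n m hpar
end

section
/- For every positive integer n and every natural number k ≥ 1, T^{(k)}(n + 2^k) = T^{(k)}(n) + 3^a, where a = #{ i : 0 ≤ i < k and T^{(i)}(n) is odd }. -/
theorem key (k : ℕ) : ∀ n c : ℕ, T^[k] (n + c * 2 ^ k) =
    T^[k] n + c * 3 ^ ((Finset.range k).filter (fun i => T^[i] n % 2 = 1)).card := by
  induction k with
  | zero => simp
  | succ k ih =>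
    intro n c
    have h2 : 2 ^ (k + 1) = 2 * 2 ^ k := by ring
    have hT : T (n + c * 2 ^ (k + 1)) = T n + (if n % 2 = 1 then 3 * c else c) * 2 ^ k := by
      unfold T
      rw [h2]
      have h3 : c * (2 * 2 ^ k) = 2 * (c * 2 ^ k) := by ring
      rw [h3]
      have hmod : (n + 2 * (c * 2 ^ k)) % 2 = n % 2 := by omega
      rcases Nat.even_or_odd n with he | ho
      · have h0 : n % 2 = 0 := Nat.even_iff.mp he
        simp only [hmod, h0]
        norm_num
        generalize c * 2 ^ k = e
        omega
      · have h1 : n % 2 = 1 := Nat.odd_iff.mp ho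
        simp only [hmod, h1]
        norm_num
        have h4 : 3 * c * 2 ^ k = 3 * (c * 2 ^ k) := by ring
        rw [h4]
        generalize c * 2 ^ k = e
        omega
    have hcard : ((Finset.range (k + 1)).filter (fun i => T^[i] n % 2 = 1)).card =
        ((Finset.range k).filter (fun i => T^[i] (T n) % 2 = 1)).card +
          (if n % 2 = 1 then 1 else 0) := by
      rw [Finset.card_filter, Finset.card_filter, Finset.sum_range_succ']
      simp [Function.iterate_succ_apply]
      rw [Finset.card_filter]
      congr 1
    rw [Function.iterate_succ_apply, Function.iterate_succ_apply, hT, hcard]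
    rcases Nat.even_or_odd n with he | ho
    · have h0 : n % 2 = 0 := Nat.even_iff.mp he
      simp only [h0]
      norm_num
      exact ih (T n) c
    · have h1 : n % 2 = 1 := Nat.odd_iff.mp ho
      simp only [h1]
      norm_num
      rw [ih (T n) (3 * c), pow_succ]
      ring

/-- For every positive integer `n` and `k ≥ 1`,
`T^[k] (n + 2^k) = T^[k] n + 3^a` where `a` counts the odd iterates among
`n, T n, …, T^[k-1] n`. -/
theorem stmt_4 (n : ℕ) (hn : 0 < n) (k : ℕ) (hk : 1 ≤ k) :
    T^[k] (n + 2 ^ k) =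
      T^[k] n + 3 ^ ((Finset.range k).filter (fun i => T^[i] n % 2 = 1)).card := by
  have := key k n 1
  simpa using this
end
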